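/- arXiv:dg-ga/9707012 — 2 statements merged into one kernel-verified Lean document; each statement's English description precedes it below -/
import Mathlib

section
/- Let f : ℝ → M_d(ℂ) be a real-analytic family of self-adjoint d×d complex matrices, and suppose λ₀ is a simple (nondegenerate) eigenvalue of f(0). Then there exist ε > 0 and a real-analytic function λ : (-ε, ε) → ℝ with λ(0) = λ₀ such that λ(s) is a simple eigenvalue of f(s) for all |s| < ε. -/
/-!
For Hermitian `A` the characteristic polynomial has real coefficients, so a real `x` is a simple
eigenvalue of `A` exactly when `g x = 0` and `g' x ≠ 0`, where `g x = Re (charpoly A).eval x`.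
Applied to `A = f s`, the function `g (s, x)` is real-analytic in both variables, and the analytic
implicit function theorem at `(0, λ₀)` produces an analytic `λ` with `g (s, λ s) = 0`; the
condition `∂ₓ g ≠ 0` persists near `0` by continuity.
-/

open Set Polynomial Filter Topology
open scoped ContDiff

theorem Polynomial.rootMultiplicity_eq_one_iff {R : Type*} [CommRing R] {p : R[X]} {t : R}
    (hp : p ≠ 0) : p.rootMultiplicity t = 1 ↔ p.IsRoot t ∧ ¬p.derivative.IsRoot t := by
  have hpos := rootMultiplicity_pos hp (x := t)
  have hlt := one_lt_rootMultiplicity_iff_isRoot hp (t := t)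
  constructor
  · intro h
    exact ⟨hpos.1 (by omega), fun hd => by have := hlt.2 ⟨hpos.1 (by omega), hd⟩; omega⟩
  · rintro ⟨hr, hd⟩
    have := hpos.2 hr
    have : ¬1 < p.rootMultiplicity t := fun h => hd (hlt.1 h).2
    omega

namespace Matrix.IsHermitian

variable {𝕜 n : Type*} [RCLike 𝕜] [Fintype n] [DecidableEq n] {A : Matrix n n 𝕜}

theorem charpoly_eq_map (hA : A.IsHermitian) :
    A.charpoly = (∏ i, (X - C (hA.eigenvalues i))).map (algebraMap ℝ 𝕜) := by
  simp [hA.charpoly_eq, Polynomial.map_prod]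

theorem rootMultiplicity_charpoly_eq_one_iff (hA : A.IsHermitian) (x : ℝ) :
    A.charpoly.rootMultiplicity (x : 𝕜) = 1 ↔
      RCLike.re (A.charpoly.eval (x : 𝕜)) = 0 ∧
        deriv (fun y : ℝ => RCLike.re (A.charpoly.eval (y : 𝕜))) x ≠ 0 := by
  set q : ℝ[X] := ∏ i, (X - C (hA.eigenvalues i))
  have hq : q.Monic := monic_prod_of_monic _ _ fun i _ => monic_X_sub_C _
  have heval : ∀ y : ℝ, RCLike.re (A.charpoly.eval (y : 𝕜)) = q.eval y := by
    intro y
    rw [hA.charpoly_eq_map, eval_map_algebraMap, ← RCLike.algebraMap_eq_ofReal,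
      aeval_algebraMap_apply, RCLike.algebraMap_eq_ofReal, RCLike.ofReal_re, coe_aeval_eq_eval]
  simp only [heval, Polynomial.deriv]
  rw [hA.charpoly_eq_map, ← RCLike.algebraMap_eq_ofReal,
    ← eq_rootMultiplicity_map (algebraMap ℝ 𝕜).injective, q.rootMultiplicity_eq_one_iff hq.ne_zero]
  rfl

end Matrix.IsHermitian

section Analytic

variable {𝕜 : Type*} [NontriviallyNormedField 𝕜] {E : Type*} [NormedAddCommGroup E]
  [NormedSpace 𝕜 E]

theorem AnalyticAt.matrix_det {n 𝔸 : Type*} [Fintype n] [DecidableEq n] [NormedCommRing 𝔸]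
    [NormedAlgebra 𝕜 𝔸] {A : E → Matrix n n 𝔸} {x : E}
    (hA : ∀ i j, AnalyticAt 𝕜 (fun y => A y i j) x) : AnalyticAt 𝕜 (fun y => (A y).det) x := by
  simp only [Matrix.det_apply']
  exact Finset.analyticAt_fun_sum _ fun σ _ =>
    analyticAt_const.mul (Finset.analyticAt_fun_prod _ fun i _ => hA (σ i) i)

theorem deriv_comp_prodMk_eq_fderiv {g : E × 𝕜 → 𝕜} {v : E × 𝕜}
    (hg : DifferentiableAt 𝕜 g v) : deriv (fun y => g (v.1, y)) v.2 = fderiv 𝕜 g v (0, 1) :=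
  (hg.hasFDerivAt.comp_hasDerivAt v.2 ((hasDerivAt_const _ v.1).prodMk (hasDerivAt_id _))).deriv

theorem AnalyticAt.continuousAt_deriv_snd [CompleteSpace 𝕜] {g : E × 𝕜 → 𝕜} {u : E × 𝕜}
    (hg : AnalyticAt 𝕜 g u) :
    ContinuousAt (fun v : E × 𝕜 => deriv (fun y => g (v.1, y)) v.2) u := by
  have hfderiv : ContinuousAt (fun v => fderiv 𝕜 g v (0, 1)) u :=
    (ContinuousLinearMap.apply 𝕜 𝕜 ((0 : E), (1 : 𝕜))).continuous.continuousAt.comp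
      hg.fderiv.continuousAt
  refine hfderiv.congr ?_
  filter_upwards [hg.eventually_analyticAt] with v hv
  exact (deriv_comp_prodMk_eq_fderiv hv.differentiableAt).symm

end Analytic

theorem AnalyticAt.exists_implicitFunction {𝕜 : Type*} [RCLike 𝕜] {E : Type*}
    [NormedAddCommGroup E] [NormedSpace 𝕜 E] [CompleteSpace E] {g : E × 𝕜 → 𝕜} {u : E × 𝕜}
    (hg : AnalyticAt 𝕜 g u) (hd : deriv (fun y => g (u.1, y)) u.2 ≠ 0) :
    ∃ ψ : E → 𝕜, AnalyticAt 𝕜 ψ u.1 ∧ ψ u.1 = u.2 ∧ ∀ᶠ x in 𝓝 u.1, g (x, ψ x) = g u := by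
  have hinv : (fderiv 𝕜 g u ∘L .inr 𝕜 E 𝕜).IsInvertible := by
    refine ⟨.unitsEquivAut 𝕜 (.mk0 _ hd), ContinuousLinearMap.ext_ring ?_⟩
    simp [deriv_comp_prodMk_eq_fderiv hg.differentiableAt]
  have hcd : ContDiffAt 𝕜 ω g u := hg.contDiffAt
  exact ⟨hcd.implicitFunction (by simp) hinv, (hcd.contDiffAt_implicitFunction _ hinv).analyticAt,
    hcd.implicitFunction_apply_self _ hinv, hcd.eventually_apply_implicitFunction _ hinv⟩

theorem analyticAt_charpoly_eval {𝕜 E n : Type*} [RCLike 𝕜] [NormedAddCommGroup E]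
    [NormedSpace ℝ E] [Fintype n] [DecidableEq n] {f : E → Matrix n n 𝕜} {v : E × ℝ}
    (hf : ∀ i j, AnalyticAt ℝ (fun s => f s i j) v.1) :
    AnalyticAt ℝ (fun w : E × ℝ => (f w.1).charpoly.eval (w.2 : 𝕜)) v := by
  simp only [Matrix.eval_charpoly]
  refine AnalyticAt.matrix_det fun i j => ?_
  simp only [Matrix.sub_apply, Matrix.scalar_apply, Matrix.diagonal_apply]
  have hfij : AnalyticAt ℝ (fun w : E × ℝ => f w.1 i j) v := (hf i j).comp analyticAt_fst
  split_ifs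
  · exact ((RCLike.ofRealCLM.analyticAt _).comp analyticAt_snd).sub hfij
  · exact analyticAt_const.sub hfij

/-- If `f : ℝ → M_d(ℂ)` is a real-analytic family of self-adjoint matrices and `λ₀` is a
simple eigenvalue of `f 0`, then there is a real-analytic function `λ` on `(-ε, ε)` with
`λ 0 = λ₀` such that `λ s` is a simple eigenvalue of `f s` for all `|s| < ε`. -/
theorem stmt0 (d : ℕ) (f : ℝ → Matrix (Fin d) (Fin d) ℂ)
    (hf : ∀ i j, AnalyticOnNhd ℝ (fun s => f s i j) Set.univ)
    (hsa : ∀ s, (f s).IsHermitian)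
    (lam0 : ℝ)
    (hsimple : ((f 0).charpoly).rootMultiplicity (lam0 : ℂ) = 1) :
    ∃ ε > (0 : ℝ), ∃ lam : ℝ → ℝ,
      AnalyticOnNhd ℝ lam (Set.Ioo (-ε) ε) ∧ lam 0 = lam0 ∧
      ∀ s ∈ Set.Ioo (-ε) ε, ((f s).charpoly).rootMultiplicity ((lam s : ℂ)) = 1 := by
  set g : ℝ × ℝ → ℝ := fun v => RCLike.re ((f v.1).charpoly.eval (v.2 : ℂ))
  have hg : ∀ v, AnalyticAt ℝ g v := fun v =>
    ((RCLike.reCLM (K := ℂ)).analyticAt _).comp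
      (analyticAt_charpoly_eval fun i j => hf i j _ trivial)
  obtain ⟨hroot0, hderiv0⟩ := ((hsa 0).rootMultiplicity_charpoly_eq_one_iff lam0).1 hsimple
  obtain ⟨lam, hlam, hlam0, hzero⟩ := (hg (0, lam0)).exists_implicitFunction hderiv0
  simp only at hlam hlam0 hzero
  have hnondeg : ∀ᶠ s in 𝓝 0, deriv (fun y => g (s, y)) (lam s) ≠ 0 :=
    ((hg (0, lam0)).continuousAt_deriv_snd.comp_of_eq
      (continuousAt_id.prodMk hlam.continuousAt) (by rw [hlam0]; rfl)).eventually_ne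
      (by rw [Function.comp_apply, id, hlam0]; exact hderiv0)
  obtain ⟨ε, hε, hball⟩ :=
    Metric.eventually_nhds_iff_ball.1 (hlam.eventually_analyticAt.and (hzero.and hnondeg))
  have hIoo : Ioo (-ε) ε = Metric.ball 0 ε := by rw [Real.ball_eq_Ioo, zero_sub, zero_add]
  refine ⟨ε, hε, lam, fun s hs => (hball s (hIoo ▸ hs)).1, hlam0, fun s hs => ?_⟩
  obtain ⟨-, hroot, hderiv⟩ := hball s (hIoo ▸ hs)
  exact ((hsa s).rootMultiplicity_charpoly_eq_one_iff (lam s)).2 ⟨hroot.trans hroot0, hderiv⟩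
end

section
/- Let q(x) = ⟨x, Qx⟩ with Q positive-definite symmetric on ℝ^k, and let g ∈ C¹_c(ℝ^k) with g(0) = 1. Then for v ∈ ℝ^k with ‖v‖ ≤ √(Ct), as t → ∞: t^{-k/2} ∫_{ℝ^k} exp(i⟨x/√t, v⟩) exp(-q(x)) g(x/√t) dx/(2π)^k = (det Q)^{-1/2}(4πt)^{-k/2} exp(-⟨v, Q^{-1}v⟩/(4t)) + O(t^{-(k+1)/2}), uniformly in such v, provided additionally that |g(x) − 1 − ∇g(0)·x| ≤ c‖x‖² for all x. -/
/-!
Let `S` be the positive square root of `Q`. The substitution `x = S⁻¹ y` turns `exp (-⟨x, Q x⟩)`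
into the standard Gaussian, whose Fourier transform is explicit; at frequency `v / √t` this is the
main term, exactly. The cutoff enters only through `g (x / √t) - 1`, which the first-order Taylor
bound makes `O(t^{-1/2} (1 + |x|²))` (the linear term is already of this size, so no cancellation
is needed); against the Gaussian weight this integrates to `O(t^{-1/2})`.
-/

open Matrix MeasureTheory Real

open scoped MatrixOrder

lemma rpow_neg_natCast_div_two {t : ℝ} (ht : 0 ≤ t) (n : ℕ) :
    t ^ (-(n : ℝ) / 2) = (√t)⁻¹ ^ n := by
  rw [sqrt_eq_rpow, ← rpow_neg ht, ← rpow_natCast, ← rpow_mul ht]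
  ring_nf

lemma inv_sqrt_pow_mul_sqrt_pi_pow_div_two_pi_pow (n : ℕ) {t : ℝ} (ht : 0 < t) :
    (√t)⁻¹ ^ n * √π ^ n / (2 * π) ^ n = (√(4 * π * t))⁻¹ ^ n := by
  rw [← mul_pow, ← div_pow]
  congr 1
  rw [sqrt_mul (by positivity), sqrt_mul (by norm_num), show (4 : ℝ) = 2 ^ 2 by norm_num,
    sqrt_sq (by norm_num)]
  have : √π ≠ 0 := (sqrt_pos.2 pi_pos).ne'
  have : √t ≠ 0 := (sqrt_pos.2 ht).ne'
  field_simp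
  rw [sq_sqrt pi_pos.le]

variable {ι : Type*} [Fintype ι]

lemma mulVec_dotProduct_mulVec_le (M : Matrix ι ι ℝ) (x : ι → ℝ) :
    (M *ᵥ x) ⬝ᵥ (M *ᵥ x) ≤ (∑ i, ∑ j, M i j ^ 2) * (x ⬝ᵥ x) := by
  simp only [dotProduct, mulVec, ← sq]
  rw [Finset.sum_mul]
  exact Finset.sum_le_sum fun i _ => Finset.sum_mul_sq_le_sq_mul_sq _ _ _

lemma norm_le_sqrt_dotProduct_self (x : ι → ℝ) : ‖x‖ ≤ √(x ⬝ᵥ x) := by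
  refine (pi_norm_le_iff_of_nonneg (sqrt_nonneg _)).2 fun i => Real.abs_le_sqrt ?_
  rw [sq]
  exact Finset.single_le_sum (f := fun j => x j * x j) (fun j _ => mul_self_nonneg _)
    (Finset.mem_univ i)

lemma norm_le_one_add_dotProduct_self (x : ι → ℝ) : ‖x‖ ≤ 1 + x ⬝ᵥ x := by
  have h0 : 0 ≤ x ⬝ᵥ x := dotProduct_star_self_nonneg x
  nlinarith [norm_le_sqrt_dotProduct_self x, sq_sqrt h0, sqrt_nonneg (x ⬝ᵥ x)]

lemma integrable_exp_neg_mul_dotProduct_self {b : ℝ} (hb : 0 < b) :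
    Integrable fun x : ι → ℝ => rexp (-(b * (x ⬝ᵥ x))) := by
  have := (GaussianFourier.integrable_cexp_neg_mul_sum_add (ι := ι) (b := b) (by simpa using hb)
    0).norm
  refine this.congr (Filter.Eventually.of_forall fun x => ?_)
  simp [Complex.norm_exp, dotProduct, ← sq, ← Complex.ofReal_pow]

lemma integral_cexp_I_mul_dotProduct_mul_exp_neg_dotProduct_self (w : ι → ℝ) :
    ∫ y : ι → ℝ, Complex.exp (Complex.I * ((y ⬝ᵥ w : ℝ) : ℂ)) * ((rexp (-(y ⬝ᵥ y)) : ℝ) : ℂ)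
      = ((√π ^ Fintype.card ι * rexp (-(w ⬝ᵥ w) / 4) : ℝ) : ℂ) := by
  have h := GaussianFourier.integral_cexp_neg_mul_sum_add (ι := ι) (b := 1) (by simp)
    fun i => Complex.I * w i
  have hπ : ((π : ℂ) / 1) ^ ((Fintype.card ι : ℂ) / 2) = ((√π ^ Fintype.card ι : ℝ) : ℂ) := by
    rw [div_one, sqrt_eq_rpow, ← rpow_natCast, ← rpow_mul pi_pos.le,
      Complex.ofReal_cpow pi_pos.le]
    push_cast; ring_nf
  rw [hπ] at h
  convert h using 2
  · ext y
    push_cast [← Complex.exp_add, dotProduct, Finset.mul_sum, ← Finset.sum_neg_distrib,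
      ← Finset.sum_add_distrib]
    exact congrArg _ (Finset.sum_congr rfl fun i _ => by ring)
  · push_cast [dotProduct, neg_div, Finset.sum_div, ← Finset.sum_neg_distrib]
    refine congrArg _ (congrArg Complex.exp (Finset.sum_congr rfl fun i _ => ?_))
    rw [mul_pow, Complex.I_sq]
    ring

lemma abs_comp_smul_sub_one_le {g : (ι → ℝ) → ℝ} {D : (ι → ℝ) →L[ℝ] ℝ} {c : ℝ}
    (hc : ∀ x, |g x - 1 - D x| ≤ c * (x ⬝ᵥ x)) {s : ℝ} (hs0 : 0 ≤ s) (hs1 : s ≤ 1)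
    (x : ι → ℝ) :
    |g (s • x) - 1| ≤ s * ((‖D‖ + |c|) * (1 + x ⬝ᵥ x)) := by
  have hx : 0 ≤ x ⬝ᵥ x := dotProduct_star_self_nonneg x
  have hlin : |D (s • x)| ≤ s * (‖D‖ * (1 + x ⬝ᵥ x)) := by
    rw [map_smul, smul_eq_mul, abs_mul, abs_of_nonneg hs0]
    gcongr
    exact (D.le_opNorm x).trans (by gcongr; exact norm_le_one_add_dotProduct_self x)
  have hrem : |g (s • x) - 1 - D (s • x)| ≤ s * (|c| * (1 + x ⬝ᵥ x)) := by
    refine (hc (s • x)).trans ?_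
    rw [smul_dotProduct, dotProduct_smul, smul_eq_mul, smul_eq_mul, ← mul_assoc s]
    have : s * s ≤ s := mul_le_of_le_one_left hs0 hs1
    calc c * (s * s * (x ⬝ᵥ x)) ≤ |c| * (s * s * (x ⬝ᵥ x)) := by gcongr; exact le_abs_self c
      _ ≤ |c| * (s * (1 + x ⬝ᵥ x)) := by gcongr; nlinarith
      _ = s * (|c| * (1 + x ⬝ᵥ x)) := by ring
  calc |g (s • x) - 1| = |D (s • x) + (g (s • x) - 1 - D (s • x))| := by ring_nf
    _ ≤ |D (s • x)| + |g (s • x) - 1 - D (s • x)| := abs_add_le _ _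
    _ ≤ s * ((‖D‖ + |c|) * (1 + x ⬝ᵥ x)) := by linarith

variable [DecidableEq ι]

lemma integral_comp_mulVec {E : Type*} [NormedAddCommGroup E] [NormedSpace ℝ E]
    {M : Matrix ι ι ℝ} (hM : M.det ≠ 0) (f : (ι → ℝ) → E) :
    ∫ x, f (M *ᵥ x) = |M.det|⁻¹ • ∫ y, f y := by
  let e := (toLin' M).equivOfDetNeZero (by rwa [LinearMap.det_toLin'])
  have he : MeasurableEmbedding (toLin' M) :=
    e.toContinuousLinearEquiv.toHomeomorph.measurableEmbedding
  simp_rw [← toLin'_apply, ← he.integral_map, Real.map_matrix_volume_pi_eq_smul_volume_pi hM,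
    integral_smul_measure, ENNReal.toReal_ofReal (abs_nonneg _), abs_inv]

namespace Matrix

variable {Q : Matrix ι ι ℝ}

lemma transpose_sqrt (Q : Matrix ι ι ℝ) : (CFC.sqrt Q)ᵀ = CFC.sqrt Q := by
  simpa [IsHermitian] using (CFC.sqrt_nonneg Q).posSemidef.isHermitian

lemma vecMul_sqrt (Q : Matrix ι ι ℝ) (x : ι → ℝ) : x ᵥ* CFC.sqrt Q = CFC.sqrt Q *ᵥ x := by
  rw [← vecMul_transpose, transpose_sqrt]

lemma PosSemidef.dotProduct_mulVec_eq_sqrt (hQ : Q.PosSemidef) (x : ι → ℝ) :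
    x ⬝ᵥ (Q *ᵥ x) = (CFC.sqrt Q *ᵥ x) ⬝ᵥ (CFC.sqrt Q *ᵥ x) := by
  conv_lhs => rw [← CFC.sqrt_mul_sqrt_self Q hQ.nonneg, ← mulVec_mulVec,
    dotProduct_mulVec, vecMul_sqrt]

namespace PosDef

lemma det_sqrt (hQ : Q.PosDef) : (CFC.sqrt Q).det = √Q.det := by
  rw [hQ.posSemidef.det_sqrt, RCLike.sqrt_real]

lemma isUnit_det_sqrt (hQ : Q.PosDef) : IsUnit (CFC.sqrt Q).det := by
  rw [hQ.det_sqrt]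
  exact (sqrt_pos.2 hQ.det_pos).ne'.isUnit

lemma exists_pos_mul_dotProduct_self_le (hQ : Q.PosDef) :
    ∃ ε > 0, ∀ x : ι → ℝ, ε * (x ⬝ᵥ x) ≤ x ⬝ᵥ (Q *ᵥ x) := by
  set S := CFC.sqrt Q
  set R := ∑ i, ∑ j, (S⁻¹ i j) ^ 2
  have hR : 0 ≤ R := by positivity
  refine ⟨(R + 1)⁻¹, by positivity, fun x => ?_⟩
  have hx : x ⬝ᵥ x ≤ R * (x ⬝ᵥ (Q *ᵥ x)) := by
    have := mulVec_dotProduct_mulVec_le S⁻¹ (S *ᵥ x)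
    rwa [mulVec_mulVec, nonsing_inv_mul _ hQ.isUnit_det_sqrt, one_mulVec,
      ← hQ.posSemidef.dotProduct_mulVec_eq_sqrt] at this
  have hq : 0 ≤ x ⬝ᵥ (Q *ᵥ x) := by simpa using hQ.posSemidef.dotProduct_mulVec_nonneg x
  rw [inv_mul_le_iff₀ (by positivity)]
  nlinarith

lemma integrable_exp_neg_dotProduct_mulVec_mul_one_add (hQ : Q.PosDef) :
    Integrable fun x : ι → ℝ => rexp (-(x ⬝ᵥ (Q *ᵥ x))) * (1 + x ⬝ᵥ x) := by
  obtain ⟨ε, hε, hεQ⟩ := hQ.exists_pos_mul_dotProduct_self_le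
  refine ((integrable_exp_neg_mul_dotProduct_self (half_pos hε)).const_mul (1 + 2 / ε)).mono'
    (Continuous.aestronglyMeasurable (by fun_prop)) (Filter.Eventually.of_forall fun x => ?_)
  have hx : 0 ≤ x ⬝ᵥ x := dotProduct_star_self_nonneg x
  -- the polynomial factor is paid for with half of the Gaussian decay
  have hpoly : 1 + x ⬝ᵥ x ≤ (1 + 2 / ε) * rexp (ε / 2 * (x ⬝ᵥ x)) := by
    have h2 : (1 + 2 / ε) * (ε / 2 * (x ⬝ᵥ x) + 1)
        = 1 + x ⬝ᵥ x + (ε / 2 * (x ⬝ᵥ x) + 2 / ε) := by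
      field_simp; ring
    have h3 : 0 ≤ ε / 2 * (x ⬝ᵥ x) + 2 / ε := by positivity
    calc 1 + x ⬝ᵥ x ≤ (1 + 2 / ε) * (ε / 2 * (x ⬝ᵥ x) + 1) := by linarith
      _ ≤ _ := by gcongr; exact add_one_le_exp _
  rw [Real.norm_of_nonneg (by positivity)]
  calc rexp (-(x ⬝ᵥ (Q *ᵥ x))) * (1 + x ⬝ᵥ x)
      ≤ rexp (-(ε * (x ⬝ᵥ x))) * ((1 + 2 / ε) * rexp (ε / 2 * (x ⬝ᵥ x))) := by
        gcongr; exact hεQ x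
    _ = (1 + 2 / ε) * rexp (-(ε / 2 * (x ⬝ᵥ x))) := by
        rw [mul_left_comm, ← exp_add]; ring_nf

lemma integral_cexp_I_mul_dotProduct_mul_exp_neg_dotProduct_mulVec (hQ : Q.PosDef)
    (ξ : ι → ℝ) :
    ∫ x : ι → ℝ, Complex.exp (Complex.I * ((x ⬝ᵥ ξ : ℝ) : ℂ)) * ((rexp (-(x ⬝ᵥ (Q *ᵥ x))) : ℝ) : ℂ)
      = ((√π ^ Fintype.card ι / √Q.det * rexp (-(ξ ⬝ᵥ (Q⁻¹ *ᵥ ξ)) / 4) : ℝ) : ℂ) := by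
  set S := CFC.sqrt Q
  have hSinv : S⁻¹ = CFC.sqrt Q⁻¹ := hQ.posSemidef.inv_sqrt
  have hdet : |S⁻¹.det|⁻¹ = √Q.det := by
    rw [det_nonsing_inv, Ring.inverse_eq_inv', hQ.det_sqrt, abs_inv, inv_inv,
      abs_of_nonneg (sqrt_nonneg _)]
  have hSS : ∀ y, S *ᵥ (S⁻¹ *ᵥ y) = y := fun y => by
    rw [mulVec_mulVec, mul_nonsing_inv _ hQ.isUnit_det_sqrt, one_mulVec]
  have hsubst : ∀ y : ι → ℝ, ((S⁻¹ *ᵥ y) ⬝ᵥ ξ) = y ⬝ᵥ (S⁻¹ *ᵥ ξ) ∧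
      (S⁻¹ *ᵥ y) ⬝ᵥ (Q *ᵥ (S⁻¹ *ᵥ y)) = y ⬝ᵥ y := fun y => by
    refine ⟨?_, by rw [hQ.posSemidef.dotProduct_mulVec_eq_sqrt, hSS]⟩
    rw [dotProduct_comm, dotProduct_mulVec, hSinv, vecMul_sqrt, dotProduct_comm]
  have hw : (S⁻¹ *ᵥ ξ) ⬝ᵥ (S⁻¹ *ᵥ ξ) = ξ ⬝ᵥ (Q⁻¹ *ᵥ ξ) := by
    rw [hSinv, hQ.inv.posSemidef.dotProduct_mulVec_eq_sqrt]
  have h := integral_comp_mulVec (M := S⁻¹) (isUnit_nonsing_inv_det _ hQ.isUnit_det_sqrt).ne_zero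
    fun x => Complex.exp (Complex.I * ((x ⬝ᵥ ξ : ℝ) : ℂ)) * ((rexp (-(x ⬝ᵥ (Q *ᵥ x))) : ℝ) : ℂ)
  simp only [hsubst, integral_cexp_I_mul_dotProduct_mul_exp_neg_dotProduct_self, hw, hdet,
    Complex.real_smul] at h
  have hd : (√Q.det : ℂ) ≠ 0 := by exact_mod_cast (sqrt_pos.2 hQ.det_pos).ne'
  rw [div_mul_eq_mul_div, Complex.ofReal_div, eq_div_iff hd, h, mul_comm]

lemma norm_integral_mul_comp_smul_sub_integral_le (hQ : Q.PosDef) {g : (ι → ℝ) → ℝ}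
    (hg : Continuous g) {D : (ι → ℝ) →L[ℝ] ℝ} {c : ℝ} (hc : ∀ x, |g x - 1 - D x| ≤ c * (x ⬝ᵥ x))
    {s : ℝ} (hs0 : 0 ≤ s) (hs1 : s ≤ 1) (v : ι → ℝ) :
    ‖(∫ x : ι → ℝ, Complex.exp (Complex.I * (((s • x) ⬝ᵥ v : ℝ) : ℂ)) *
        ((rexp (-(x ⬝ᵥ (Q *ᵥ x))) : ℝ) : ℂ) * ((g (s • x) : ℝ) : ℂ)) -
      ∫ x : ι → ℝ, Complex.exp (Complex.I * (((s • x) ⬝ᵥ v : ℝ) : ℂ)) *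
        ((rexp (-(x ⬝ᵥ (Q *ᵥ x))) : ℝ) : ℂ)‖
      ≤ s * ((‖D‖ + |c|) * ∫ x, rexp (-(x ⬝ᵥ (Q *ᵥ x))) * (1 + x ⬝ᵥ x)) := by
  set φ : (ι → ℝ) → ℂ := fun x => Complex.exp (Complex.I * (((s • x) ⬝ᵥ v : ℝ) : ℂ)) *
    ((rexp (-(x ⬝ᵥ (Q *ᵥ x))) : ℝ) : ℂ)
  have hB := hQ.integrable_exp_neg_dotProduct_mulVec_mul_one_add
  have hφ : ∀ x, ‖φ x‖ = rexp (-(x ⬝ᵥ (Q *ᵥ x))) := fun x => by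
    simp [φ, Complex.norm_exp]
  have hdiff : ∀ x, ‖φ x * g (s • x) - φ x‖
      ≤ s * (‖D‖ + |c|) * (rexp (-(x ⬝ᵥ (Q *ᵥ x))) * (1 + x ⬝ᵥ x)) := fun x => by
    rw [← mul_sub_one, norm_mul, hφ, ← Complex.ofReal_one, ← Complex.ofReal_sub,
      Complex.norm_real, norm_eq_abs]
    have := abs_comp_smul_sub_one_le hc hs0 hs1 x
    calc _ ≤ rexp (-(x ⬝ᵥ (Q *ᵥ x))) * (s * ((‖D‖ + |c|) * (1 + x ⬝ᵥ x))) := by gcongr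
      _ = _ := by ring
  have hφint : Integrable φ := hB.mono' (Continuous.aestronglyMeasurable (by fun_prop))
    (Filter.Eventually.of_forall fun x => by
      rw [hφ]; exact le_mul_of_one_le_right (exp_pos _).le
        (le_add_of_nonneg_right (dotProduct_star_self_nonneg x)))
  have hdiff_int : Integrable fun x => φ x * g (s • x) - φ x :=
    (hB.const_mul _).mono' (Continuous.aestronglyMeasurable (by fun_prop))
      (Filter.Eventually.of_forall hdiff)
  have h1 : Integrable fun x => φ x * g (s • x) :=
    (hdiff_int.add hφint).congr (Filter.Eventually.of_forall fun x => by simp)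
  rw [← integral_sub h1 hφint, ← mul_assoc, ← integral_const_mul]
  exact (norm_integral_le_integral_norm _).trans
    (integral_mono hdiff_int.norm (hB.const_mul _) hdiff)

lemma rpow_mul_integral_gaussian_div_eq (hQ : Q.PosDef) {t : ℝ} (ht : 0 < t) (v : ι → ℝ) :
    ((t ^ (-(Fintype.card ι : ℝ) / 2) : ℝ) : ℂ) *
        (∫ x : ι → ℝ, Complex.exp (Complex.I * ((((√t)⁻¹ • x) ⬝ᵥ v : ℝ) : ℂ)) *
          ((rexp (-(x ⬝ᵥ (Q *ᵥ x))) : ℝ) : ℂ)) / ((2 * π) ^ Fintype.card ι : ℂ)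
      = ((Q.det ^ (-(1 : ℝ) / 2) * (4 * π * t) ^ (-(Fintype.card ι : ℝ) / 2) *
          rexp (-(v ⬝ᵥ (Q⁻¹ *ᵥ v)) / (4 * t)) : ℝ) : ℂ) := by
  have hphase : ∀ x : ι → ℝ, ((√t)⁻¹ • x) ⬝ᵥ v = x ⬝ᵥ ((√t)⁻¹ • v) := fun x => by
    rw [smul_dotProduct, dotProduct_smul]
  have hq : ((√t)⁻¹ • v) ⬝ᵥ (Q⁻¹ *ᵥ ((√t)⁻¹ • v)) = (v ⬝ᵥ (Q⁻¹ *ᵥ v)) / t := by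
    rw [mulVec_smul, smul_dotProduct, dotProduct_smul, smul_eq_mul, smul_eq_mul, ← mul_assoc,
      ← mul_inv, mul_self_sqrt ht.le, inv_mul_eq_div]
  have hdet : Q.det ^ (-(1 : ℝ) / 2) = (√Q.det)⁻¹ := by
    rw [neg_div, rpow_neg hQ.det_pos.le, sqrt_eq_rpow, one_div]
  simp_rw [hphase, hQ.integral_cexp_I_mul_dotProduct_mul_exp_neg_dotProduct_mulVec, hq,
    rpow_neg_natCast_div_two ht.le, rpow_neg_natCast_div_two (by positivity : 0 ≤ 4 * π * t),
    ← inv_sqrt_pow_mul_sqrt_pi_pow_div_two_pi_pow _ ht, hdet]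
  push_cast
  ring_nf

end PosDef

end Matrix

theorem stmt13_general (k : ℕ) (Q : Matrix (Fin k) (Fin k) ℝ) (hQ : Q.PosDef)
    (g : (Fin k → ℝ) → ℝ) (hg : ContDiff ℝ 1 g)
    (c : ℝ) (hc : ∀ x : Fin k → ℝ, |g x - 1 - fderiv ℝ g 0 x| ≤ c * (x ⬝ᵥ x))
    (C : ℝ) :
    ∃ K T : ℝ, ∀ t : ℝ, T ≤ t → ∀ v : Fin k → ℝ, v ⬝ᵥ v ≤ C * t →
      ‖(((((t : ℝ) ^ (-(k : ℝ) / 2) : ℝ)) : ℂ) *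
            ∫ x : Fin k → ℝ,
              Complex.exp (Complex.I * ((((Real.sqrt t)⁻¹ • x) ⬝ᵥ v : ℝ) : ℂ)) *
                ((Real.exp (-(x ⬝ᵥ (Q *ᵥ x))) : ℝ) : ℂ) *
                ((g ((Real.sqrt t)⁻¹ • x) : ℝ) : ℂ)) / ((2 * π) ^ k : ℂ) -
          (((Q.det ^ (-(1 : ℝ) / 2) * (4 * π * t) ^ (-(k : ℝ) / 2) *
            Real.exp (-(v ⬝ᵥ (Q⁻¹ *ᵥ v)) / (4 * t)) : ℝ)) : ℂ)‖
        ≤ K * t ^ (-((k : ℝ) + 1) / 2) := by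
  set B := ∫ x : Fin k → ℝ, rexp (-(x ⬝ᵥ (Q *ᵥ x))) * (1 + x ⬝ᵥ x)
  set M := ‖fderiv ℝ g 0‖ + |c|
  refine ⟨M * B / (2 * π) ^ k, 1, fun t ht v _ => ?_⟩
  have ht0 : 0 < t := by linarith
  have hs1 : (√t)⁻¹ ≤ 1 := inv_le_one_of_one_le₀ (one_le_sqrt.2 ht)
  have hmain := hQ.rpow_mul_integral_gaussian_div_eq ht0 v
  have hest :=
    hQ.norm_integral_mul_comp_smul_sub_integral_le hg.continuous hc (by positivity) hs1 v
  rw [Fintype.card_fin] at hmain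
  rw [← hmain, ← sub_div, ← mul_sub, norm_div, norm_mul, Complex.norm_real,
    norm_of_nonneg (by positivity), norm_pow, Complex.norm_mul, Complex.norm_real,
    Complex.norm_ofNat, norm_of_nonneg pi_pos.le]
  calc t ^ (-(k : ℝ) / 2) * ‖_‖ / (2 * π) ^ k
      ≤ t ^ (-(k : ℝ) / 2) * ((√t)⁻¹ * (M * B)) / (2 * π) ^ k := by gcongr
    _ = M * B / (2 * π) ^ k * t ^ (-((k : ℝ) + 1) / 2) := by
      rw [rpow_neg_natCast_div_two ht0.le, show -((k : ℝ) + 1) / 2 = -((k + 1 : ℕ) : ℝ) / 2 by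
        push_cast; ring, rpow_neg_natCast_div_two ht0.le]
      ring

/-- Stationary-phase-type asymptotics: for positive-definite symmetric `Q` and a C¹
compactly-supported `g` with `g(0) = 1` and quadratic Taylor remainder bound, as `t → ∞`,
`t^{-k/2} ∫ e^{i⟨x/√t,v⟩} e^{-⟨x,Qx⟩} g(x/√t) dx/(2π)^k` equals
`(det Q)^{-1/2}(4πt)^{-k/2} e^{-⟨v,Q⁻¹v⟩/(4t)} + O(t^{-(k+1)/2})`, uniformly over
`‖v‖ ≤ √(Ct)`. -/
theorem stmt13 (k : ℕ) (Q : Matrix (Fin k) (Fin k) ℝ) (hQ : Q.PosDef)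
    (g : (Fin k → ℝ) → ℝ) (hg : ContDiff ℝ 1 g) (hgc : HasCompactSupport g)
    (hg0 : g 0 = 1)
    (c : ℝ) (hc : ∀ x : Fin k → ℝ, |g x - 1 - fderiv ℝ g 0 x| ≤ c * (x ⬝ᵥ x))
    (C : ℝ) (hC : 0 < C) :
    ∃ K T : ℝ, ∀ t : ℝ, T ≤ t → ∀ v : Fin k → ℝ, v ⬝ᵥ v ≤ C * t →
      ‖(((((t : ℝ) ^ (-(k : ℝ) / 2) : ℝ)) : ℂ) *
            ∫ x : Fin k → ℝ,
              Complex.exp (Complex.I * ((((Real.sqrt t)⁻¹ • x) ⬝ᵥ v : ℝ) : ℂ)) *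
                ((Real.exp (-(x ⬝ᵥ (Q *ᵥ x))) : ℝ) : ℂ) *
                ((g ((Real.sqrt t)⁻¹ • x) : ℝ) : ℂ)) / ((2 * π) ^ k : ℂ) -
          (((Q.det ^ (-(1 : ℝ) / 2) * (4 * π * t) ^ (-(k : ℝ) / 2) *
            Real.exp (-(v ⬝ᵥ (Q⁻¹ *ᵥ v)) / (4 * t)) : ℝ)) : ℂ)‖
        ≤ K * t ^ (-((k : ℝ) + 1) / 2) :=
  stmt13_general k Q hQ g hg c hc C
end
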